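/- Let n ≥ 4 and let T be a d-equidistant ultrametric n-tree all of whose edge weights are nonnegative integers, with total weight D. Let v_1,…,v_{n−1} be an enumeration of the internal vertices with v_i ≤_T v_j implying j ≤ i, let α be an injective map from internal vertices to leaves with v_i ≤_T α(v_i) =: a_i, and let b_i be the unique leaf with v_i ≤_T b_i and b_i ∉ {a_1,…,a_i}. Let M be the n×n matrix over ℂ((t)) whose rows are (1,…,1), (x_i^{(1)})_i, ((x_i^{(1)})²)_i, (x_i^{(2)})_i, …, (x_i^{(n−2)})_i, where x_i^{(j)} = Σ_e a_j(e)·t^{−h(e)} (sum over edges e on the path from the root to leaf i) for complex variables a_j(e), and let M* be the column reduction (c_{a_{n−1},b_{n−1}} ∘ ⋯ ∘ c_{a_2,b_2} ∘ c_{a_1,b_1})(M), where c_{a,b} subtracts column b from column a. Then there exists a nonzero polynomial P over ℂ in the variables a_j(e) such that for every assignment with P ≠ 0 and every permutation σ of {1,…,n} with ∏_{i=1}^n M*_{i,σ(i)} ≠ 0, the t-adic valuation of ∏_{i=1}^n M*_{i,σ(i)} equals −(Σ_{i=1}^{n−1} h(v_i) + d) = −D. -/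

import Mathlib

open SimpleGraph

/-- A `d`-equidistant ultrametric `n`-tree with nonnegative integer edge weights:
a rooted binary tree whose `n` leaves are labeled by `Fin n`, with a nonnegative
integer weight on each edge, such that the path from the root to every leaf has
total weight `d`, and the path between any two distinct leaves has positive total
weight. -/
structure UltraTree (n : ℕ) where
  V : Type
  [fintypeV : Fintype V]
  [decEqV : DecidableEq V]
  G : SimpleGraph V
  [decAdj : DecidableRel G.Adj]
  isTree : G.IsTree
  root : V
  root_deg : G.degree root = 2
  deg_of_ne_root : ∀ v : V, v ≠ root → G.degree v = 3 ∨ G.degree v = 1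
  leaf : Fin n → V
  leaf_inj : Function.Injective leaf
  leaf_deg : ∀ i : Fin n, G.degree (leaf i) = 1
  leaf_surj : ∀ v : V, G.degree v = 1 → ∃ i : Fin n, leaf i = v
  d : ℤ
  weight : Sym2 V → ℤ
  weight_nonneg : ∀ e ∈ G.edgeSet, 0 ≤ weight e
  equidistant : ∀ i : Fin n, ∀ p : G.Walk root (leaf i), p.IsPath →
    (p.edges.map weight).sum = d
  leafpair_pos : ∀ i j : Fin n, i ≠ j →
    ∀ p : G.Walk (leaf i) (leaf j), p.IsPath → 0 < (p.edges.map weight).sum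

attribute [instance] UltraTree.fintypeV UltraTree.decEqV UltraTree.decAdj

/-- The unique path from the root to `v`. -/
noncomputable def rootPath {n : ℕ} (T : UltraTree n) (v : T.V) :
    T.G.Walk T.root v :=
  (T.isTree.existsUnique_path T.root v).exists.choose

/-- `depth T v` is the total weight of the (unique) path from the root to `v`. -/
noncomputable def depth {n : ℕ} (T : UltraTree n) (v : T.V) : ℤ :=
  ((rootPath T v).edges.map T.weight).sum

/-- For an edge `e`, `hEdge T e = d - depth u` where `u` is the endpoint of `e`
nearer the root (since the weights are nonnegative, this is the endpoint of
smaller depth). -/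
noncomputable def hEdge {n : ℕ} (T : UltraTree n) (e : Sym2 T.V) : ℤ :=
  T.d - Sym2.lift ⟨fun u w => min (depth T u) (depth T w),
    fun u w => by simp [min_comm]⟩ e

/-- `xval T a j i` is `x_i^{(j)} = Σ_e a_j(e) t^{-h(e)} ∈ ℂ((t))`, the sum running
over the edges `e` on the path from the root to leaf `i`. -/
noncomputable def xval {n : ℕ} (T : UltraTree n) (a : ℕ → Sym2 T.V → ℂ)
    (j : ℕ) (i : Fin n) : LaurentSeries ℂ :=
  ((rootPath T (T.leaf i)).edges.map
    (fun e => HahnSeries.single (-(hEdge T e)) (a j e))).sum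

/-- The matrix `M` whose rows are `(1,…,1)`, `(x_i^{(1)})_i`, `((x_i^{(1)})²)_i`,
`(x_i^{(2)})_i`, …, `(x_i^{(n-2)})_i`. -/
noncomputable def Mmat {n : ℕ} (T : UltraTree n) (a : ℕ → Sym2 T.V → ℂ) :
    Matrix (Fin n) (Fin n) (LaurentSeries ℂ) :=
  fun r c =>
    if r.val = 0 then 1
    else if r.val = 1 then xval T a 1 c
    else if r.val = 2 then (xval T a 1 c) ^ 2
    else xval T a (r.val - 1) c

/-- The tree order on `T`: `v ≤_T w` iff `v` lies on the (unique) path from the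
root to `w`. -/
def treeLE {n : ℕ} (T : UltraTree n) (v w : T.V) : Prop :=
  ∀ p : T.G.Walk T.root w, p.IsPath → v ∈ p.support

/-- A vertex is internal iff it is the root or has degree 3. -/
def isInternal {n : ℕ} (T : UltraTree n) (v : T.V) : Prop :=
  v = T.root ∨ T.G.degree v = 3

/-- The column operation `c_{p,q}`: subtract column `q` from column `p`. -/
noncomputable def colRed {n : ℕ} (N : Matrix (Fin n) (Fin n) (LaurentSeries ℂ)) (p q : Fin n) :
    Matrix (Fin n) (Fin n) (LaurentSeries ℂ) :=
  N.updateCol p (fun r => N r p - N r q)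

/-- The column reduction `M* = (c_{a_{n-1},b_{n-1}} ∘ ⋯ ∘ c_{a_1,b_1})(M)`:
first subtract column `b 0` from column `a 0`, then column `b 1` from column
`a 1`, and so on. -/
noncomputable def Mstar {n : ℕ} (T : UltraTree n) (av : ℕ → Sym2 T.V → ℂ)
    (a b : Fin (n - 1) → Fin n) : Matrix (Fin n) (Fin n) (LaurentSeries ℂ) :=
  (List.finRange (n - 1)).foldl (fun N i => colRed N (a i) (b i)) (Mmat T av)

/-!
Column reduction replaces column `a i` of `M` by `M (a i) - M (b i)` and leaves exactly one
column unchanged. The leaves `a i` and `b i` lie below different children of `v i`: otherwise the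
subtree at that child would contain too many leaves, since every subtree has exactly one more leaf
than internal vertices. Hence the coefficient of `t ^ (depth (v i) - d)` in
`x_{a i}^{(j)} - x_{b i}^{(j)}` is a nonzero linear form in the variables `a_j(e)` and no lower
power of `t` occurs; likewise `x_{a i}^{(1)} + x_{b i}^{(1)}` starts at `t ^ (-d)`. The polynomial
`P` is the product of all these leading forms. A nonzero permutation product must send row `0`
to the unchanged column, and only row `2` (the squares) picks up the extra `-d`.

Finally `∑ h (v i) + d = D`: the sum of `depth c - depth (parent c)` over the non-root vertices
counts the depth `d` of every leaf once and the depth of every internal vertex once positively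
and twice negatively.
-/

namespace HahnSeries

open Finset

variable {Γ R : Type*}

theorem order_eq_of_coeff_ne_zero_of_forall_lt [Zero Γ] [LinearOrder Γ] [Zero R]
    {x : HahnSeries Γ R} {m : Γ} (hm : x.coeff m ≠ 0) (hlt : ∀ k < m, x.coeff k = 0) :
    x.order = m :=
  le_antisymm (order_le_of_coeff_ne_zero hm)
    ((le_order_iff_forall (ne_zero_of_coeff_ne_zero hm)).2 hlt)

theorem order_prod [AddCommMonoid Γ] [LinearOrder Γ] [IsOrderedCancelAddMonoid Γ] [CommRing R]
    [IsDomain R] {ι : Type*} (s : Finset ι) (f : ι → HahnSeries Γ R)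
    (hf : ∀ i ∈ s, f i ≠ 0) :
    (∏ i ∈ s, f i).order = ∑ i ∈ s, (f i).order := by
  classical
  induction s using Finset.induction_on with
  | empty => simp
  | insert i s hi ih =>
    have hs : ∀ j ∈ s, f j ≠ 0 := fun j hj => hf j (mem_insert_of_mem hj)
    rw [prod_insert hi, sum_insert hi, order_mul (hf i (mem_insert_self i s))
      (prod_ne_zero_iff.2 hs), ih hs]

end HahnSeries

theorem foldl_colRed_apply_of_forall_ne {n : ℕ} {ι : Type*} (l : List ι) (a b : ι → Fin n)
    (N : Matrix (Fin n) (Fin n) (LaurentSeries ℂ)) (r : Fin n) {c : Fin n}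
    (hc : ∀ i ∈ l, a i ≠ c) :
    l.foldl (fun N i => colRed N (a i) (b i)) N r c = N r c := by
  induction l generalizing N with
  | nil => rfl
  | cons i l ih =>
    rw [List.foldl_cons, ih _ fun j hj => hc j (List.mem_cons_of_mem _ hj)]
    exact Matrix.updateCol_ne (hc i List.mem_cons_self).symm

theorem foldl_colRed_apply_of_eq_append {n : ℕ} {ι : Type*} {l l₁ l₂ : List ι} {i : ι}
    (hl : l = l₁ ++ i :: l₂) (a b : ι → Fin n)
    (N : Matrix (Fin n) (Fin n) (LaurentSeries ℂ)) (r : Fin n) (ha : ∀ j ∈ l₁ ++ l₂, a j ≠ a i) (hb : ∀ j ∈ i :: l₁, a j ≠ b i) :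
    l.foldl (fun N i => colRed N (a i) (b i)) N r (a i) = N r (a i) - N r (b i) := by
  subst hl
  rw [List.foldl_append, List.foldl_cons,
    foldl_colRed_apply_of_forall_ne _ _ _ _ _ fun j hj => ha j (List.mem_append_right _ hj)]
  refine Matrix.updateCol_self.trans ?_
  rw [foldl_colRed_apply_of_forall_ne _ _ _ _ _ fun j hj => ha j (List.mem_append_left _ hj),
    foldl_colRed_apply_of_forall_ne _ _ _ _ _ fun j hj => hb j (List.mem_cons_of_mem _ hj)]

namespace UltraTree

open Finset MvPolynomial Walk

variable {n : ℕ} (T : UltraTree n)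

/-! ### Paths from the root -/

theorem rootPath_isPath (v : T.V) : (rootPath T v).IsPath :=
  (T.isTree.existsUnique_path T.root v).exists.choose_spec

theorem eq_rootPath {v : T.V} {p : T.G.Walk T.root v} (hp : p.IsPath) : p = rootPath T v :=
  (T.isTree.existsUnique_path T.root v).unique hp (T.rootPath_isPath v)

theorem rootPath_root : rootPath T T.root = .nil :=
  (T.eq_rootPath .nil).symm

theorem depth_root : depth T T.root = 0 := by
  simp [depth, rootPath_root]

theorem treeLE_iff {u z : T.V} : treeLE T u z ↔ u ∈ (rootPath T z).support :=
  ⟨fun h => h _ (T.rootPath_isPath z), fun h _ hp => T.eq_rootPath hp ▸ h⟩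

theorem treeLE_refl (v : T.V) : treeLE T v v :=
  fun p _ => p.end_mem_support

theorem root_treeLE (v : T.V) : treeLE T T.root v :=
  fun p _ => p.start_mem_support

theorem exists_rootPath_eq_append {u z : T.V} (h : treeLE T u z) :
    ∃ q : T.G.Walk u z, rootPath T z = (rootPath T u).append q := by
  rw [treeLE_iff] at h
  refine ⟨(rootPath T z).dropUntil u h, ?_⟩
  conv_lhs => rw [← (rootPath T z).take_spec h]
  rw [T.eq_rootPath ((T.rootPath_isPath z).takeUntil h)]

theorem treeLE_of_rootPath_eq_append {u z : T.V} {q : T.G.Walk u z}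
    (hq : rootPath T z = (rootPath T u).append q) : treeLE T u z := by
  rw [treeLE_iff, hq, mem_support_append_iff]
  exact .inl (rootPath T u).end_mem_support

theorem rootPath_eq_append_takeUntil {u z y : T.V} {q : T.G.Walk u z}
    (hq : rootPath T z = (rootPath T u).append q) (hy : y ∈ q.support) :
    rootPath T y = (rootPath T u).append (q.takeUntil y hy) := by
  have hz := T.rootPath_isPath z
  rw [hq, ← q.take_spec hy, append_assoc] at hz
  exact (T.eq_rootPath hz.of_append_left).symm

theorem treeLE_trans {u v w : T.V} (huv : treeLE T u v) (hvw : treeLE T v w) :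
    treeLE T u w := by
  obtain ⟨q, hq⟩ := T.exists_rootPath_eq_append huv
  obtain ⟨q', hq'⟩ := T.exists_rootPath_eq_append hvw
  exact T.treeLE_of_rootPath_eq_append (q := q.append q') (by rw [hq', hq, append_assoc])

theorem length_rootPath_le {u z : T.V} (h : treeLE T u z) :
    (rootPath T u).length ≤ (rootPath T z).length := by
  obtain ⟨q, hq⟩ := T.exists_rootPath_eq_append h
  rw [hq, length_append]
  exact Nat.le_add_right _ _

theorem eq_of_treeLE_of_length_eq {u u' z : T.V} (hu : treeLE T u z) (hu' : treeLE T u' z)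
    (hl : (rootPath T u).length = (rootPath T u').length) : u = u' := by
  obtain ⟨q, hq⟩ := T.exists_rootPath_eq_append hu
  obtain ⟨q', hq'⟩ := T.exists_rootPath_eq_append hu'
  have h := congrArg (fun p => p.getVert (rootPath T u).length) (hq.symm.trans hq')
  simp only [getVert_append, lt_irrefl, ↓reduceIte, Nat.sub_self, getVert_zero, hl] at h
  exact h

theorem sum_weight_nonneg {u v : T.V} (p : T.G.Walk u v) : 0 ≤ (p.edges.map T.weight).sum :=
  List.sum_nonneg (by simpa using fun e he => T.weight_nonneg e (p.edges_subset_edgeSet he))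

theorem depth_leaf (i : Fin n) : depth T (T.leaf i) = T.d :=
  T.equidistant i _ (T.rootPath_isPath _)

theorem depth_eq_add_of_rootPath_eq_append {u z : T.V} {q : T.G.Walk u z}
    (hq : rootPath T z = (rootPath T u).append q) :
    depth T z = depth T u + (q.edges.map T.weight).sum := by
  simp [depth, hq]

theorem depth_le_of_treeLE {u z : T.V} (h : treeLE T u z) : depth T u ≤ depth T z := by
  obtain ⟨q, hq⟩ := T.exists_rootPath_eq_append h
  rw [T.depth_eq_add_of_rootPath_eq_append hq]
  linarith [T.sum_weight_nonneg q]

theorem hEdge_mk (u w : T.V) : hEdge T s(u, w) = T.d - min (depth T u) (depth T w) := rfl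

theorem hEdge_le_of_mem_edges {u z : T.V} {q : T.G.Walk u z}
    (hq : rootPath T z = (rootPath T u).append q) {e : Sym2 T.V} (he : e ∈ q.edges) :
    hEdge T e ≤ T.d - depth T u := by
  induction e using Sym2.ind with | h x y =>
  have hdepth {t : T.V} (ht : t ∈ q.support) : depth T u ≤ depth T t :=
    T.depth_le_of_treeLE <| T.treeLE_of_rootPath_eq_append
      (T.rootPath_eq_append_takeUntil hq ht)
  rw [hEdge_mk]
  have := le_min (hdepth (q.fst_mem_support_of_mem_edges he))
    (hdepth (q.snd_mem_support_of_mem_edges he))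
  omega

/-! ### Parents, children and subtrees -/

theorem isInternal_iff_degree_ne_one {w : T.V} : isInternal T w ↔ T.G.degree w ≠ 1 := by
  constructor
  · rintro (rfl | h) <;> simp [T.root_deg, *]
  · intro h
    by_cases hw : w = T.root
    · exact .inl hw
    · exact .inr ((T.deg_of_ne_root w hw).resolve_right h)

instance (w : T.V) : Decidable (isInternal T w) :=
  inferInstanceAs (Decidable (_ ∨ _))

noncomputable def parent (c : T.V) : T.V :=
  (rootPath T c).penultimate

open Classical in
noncomputable def children (w : T.V) : Finset T.V :=
  {c | c ≠ T.root ∧ T.parent c = w}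

open Classical in
noncomputable def subtree (w : T.V) : Finset T.V :=
  {z | treeLE T w z}

theorem mem_children {w c : T.V} : c ∈ T.children w ↔ c ≠ T.root ∧ T.parent c = w := by
  simp [children]

theorem mem_subtree {w z : T.V} : z ∈ T.subtree w ↔ treeLE T w z := by
  simp [subtree]

theorem parent_adj {c : T.V} (hc : c ≠ T.root) : T.G.Adj (T.parent c) c :=
  adj_penultimate fun h => hc h.eq.symm

theorem rootPath_eq_concat_parent {c : T.V} (hc : c ≠ T.root) :
    rootPath T c = (rootPath T (T.parent c)).concat (T.parent_adj hc) := by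
  have h : (rootPath T c).dropLast = rootPath T (T.parent c) :=
    T.eq_rootPath (T.rootPath_isPath c).dropLast
  rw [← h]
  exact (concat_dropLast _).symm

theorem length_rootPath_parent {c : T.V} (hc : c ≠ T.root) :
    (rootPath T c).length = (rootPath T (T.parent c)).length + 1 := by
  conv_lhs => rw [T.rootPath_eq_concat_parent hc]
  exact length_concat _ _

theorem depth_parent {c : T.V} (hc : c ≠ T.root) :
    depth T c = depth T (T.parent c) + T.weight s(T.parent c, c) := by
  conv_lhs => rw [depth, T.rootPath_eq_concat_parent hc]
  simp [depth]

theorem parent_treeLE {c : T.V} (hc : c ≠ T.root) : treeLE T (T.parent c) c :=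
  T.treeLE_of_rootPath_eq_append (by rw [T.rootPath_eq_concat_parent hc, concat_eq_append])

theorem not_treeLE_parent {c : T.V} (hc : c ≠ T.root) : ¬ treeLE T c (T.parent c) := fun h => by
  have := T.length_rootPath_le h
  rw [T.length_rootPath_parent hc] at this
  omega

theorem mem_children_of_rootPath_eq_concat {w c : T.V} {hadj : T.G.Adj w c}
    (h : rootPath T c = (rootPath T w).concat hadj) : c ∈ T.children w := by
  refine T.mem_children.2 ⟨?_, by rw [parent, h, penultimate_concat]⟩
  rintro rfl
  simpa [rootPath_root] using congrArg Walk.length h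

theorem exists_mem_children_treeLE {w z : T.V} (h : treeLE T w z) (hne : w ≠ z) :
    ∃ c ∈ T.children w, treeLE T c z := by
  obtain ⟨q, hq⟩ := T.exists_rootPath_eq_append h
  cases q with
  | nil => exact absurd rfl hne
  | @cons _ c _ hadj q =>
    rw [← concat_append] at hq
    have hc := T.eq_rootPath ((hq ▸ T.rootPath_isPath z).of_append_left)
    exact ⟨c, T.mem_children_of_rootPath_eq_concat hc.symm,
      T.treeLE_of_rootPath_eq_append (by rw [hq, hc])⟩

theorem adj_iff_parent {w x : T.V} :
    T.G.Adj w x ↔ (w ≠ T.root ∧ T.parent w = x) ∨ (x ≠ T.root ∧ T.parent x = w) := by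
  refine ⟨fun hadj => ?_, ?_⟩
  · by_cases hx : treeLE T x w
    · obtain ⟨q, hq⟩ := T.exists_rootPath_eq_append hx
      have hq' : q = cons hadj.symm nil :=
        (T.isTree.existsUnique_path x w).unique ((hq ▸ T.rootPath_isPath w).of_append_right)
          (IsPath.nil.cons (by simpa using hadj.ne'))
      rw [hq', ← concat_eq_append] at hq
      exact .inl (T.mem_children.1 (T.mem_children_of_rootPath_eq_concat hq))
    · rw [treeLE_iff] at hx
      exact .inr (T.mem_children.1 (T.mem_children_of_rootPath_eq_concat
        (T.eq_rootPath ((T.rootPath_isPath w).concat hx hadj)).symm))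
  · rintro (⟨hw, rfl⟩ | ⟨hx, rfl⟩)
    · exact (T.parent_adj hw).symm
    · exact T.parent_adj hx

theorem card_children_add_ite (w : T.V) :
    #(T.children w) + (if w = T.root then 0 else 1) = T.G.degree w := by
  rw [← card_neighborFinset_eq_degree]
  split_ifs with hw
  · subst hw
    rw [add_zero]
    congr 1
    ext x
    simp [mem_children, adj_iff_parent]
  · have hp : T.parent w ∉ T.children w := fun h => by
      have h' := T.mem_children.1 h
      have l1 := T.length_rootPath_parent hw
      have l2 := T.length_rootPath_parent h'.1
      rw [h'.2] at l2
      omega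
    rw [← card_insert_of_notMem hp]
    congr 1
    ext x
    simp only [mem_insert, mem_children, mem_neighborFinset, adj_iff_parent, hw, ne_eq,
      not_false_eq_true, true_and]
    tauto

theorem card_children_of_isInternal {w : T.V} (hw : isInternal T w) : #(T.children w) = 2 := by
  have h := T.card_children_add_ite w
  rcases hw with rfl | h3
  · simpa [T.root_deg] using h
  · have hw : w ≠ T.root := by rintro rfl; rw [T.root_deg] at h3; omega
    rw [if_neg hw, h3] at h
    omega

theorem children_eq_empty_of_degree_eq_one {w : T.V} (hw : T.G.degree w = 1) :
    T.children w = ∅ := by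
  have h := T.card_children_add_ite w
  have hr : w ≠ T.root := by rintro rfl; rw [T.root_deg] at hw; omega
  rw [if_neg hr, hw] at h
  exact card_eq_zero.1 (by omega)

theorem induction_on_children {P : T.V → Prop} (h : ∀ w, (∀ c ∈ T.children w, P c) → P w)
    (w : T.V) : P w := by
  induction hk : Fintype.card T.V - (rootPath T w).length using Nat.strong_induction_on
    generalizing w with
  | _ k ih =>
  refine h w fun c hc => ih _ ?_ c rfl
  have hlt := (T.rootPath_isPath c).length_lt
  have hlen := T.length_rootPath_parent (T.mem_children.1 hc).1
  rw [(T.mem_children.1 hc).2] at hlen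
  omega

theorem subtree_eq_insert_biUnion (w : T.V) :
    T.subtree w = insert w ((T.children w).biUnion T.subtree) := by
  ext z
  simp only [mem_insert, mem_biUnion, mem_subtree]
  refine ⟨fun h => ?_, ?_⟩
  · by_cases hz : z = w
    · exact .inl hz
    · exact .inr (T.exists_mem_children_treeLE h (Ne.symm hz))
  · rintro (rfl | ⟨c, hc, hcz⟩)
    · exact T.treeLE_refl z
    · obtain ⟨hroot, rfl⟩ := T.mem_children.1 hc
      exact T.treeLE_trans (T.parent_treeLE hroot) hcz

theorem eq_of_mem_children_of_treeLE {w c c' z : T.V} (hc : c ∈ T.children w)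
    (hc' : c' ∈ T.children w) (hcz : treeLE T c z) (hc'z : treeLE T c' z) : c = c' := by
  obtain ⟨hroot, rfl⟩ := T.mem_children.1 hc
  obtain ⟨hroot', hpar⟩ := T.mem_children.1 hc'
  refine T.eq_of_treeLE_of_length_eq hcz hc'z ?_
  rw [T.length_rootPath_parent hroot, T.length_rootPath_parent hroot', hpar]

theorem card_filter_subtree (p : T.V → Prop) [DecidablePred p] (w : T.V) :
    #{z ∈ T.subtree w | p z} =
      (if p w then 1 else 0) + ∑ c ∈ T.children w, #{z ∈ T.subtree c | p z} := by
  have hw : w ∉ (T.children w).biUnion T.subtree := by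
    simp only [mem_biUnion, mem_subtree, not_exists, not_and]
    intro c hc
    obtain ⟨hroot, rfl⟩ := T.mem_children.1 hc
    exact T.not_treeLE_parent hroot
  have hdisj : (T.children w : Set T.V).PairwiseDisjoint T.subtree :=
    fun c hc c' hc' hne => disjoint_left.2 fun z hz hz' =>
      hne (T.eq_of_mem_children_of_treeLE hc hc' (T.mem_subtree.1 hz) (T.mem_subtree.1 hz'))
  have hcard : #(((T.children w).biUnion T.subtree).filter p) =
      ∑ c ∈ T.children w, #{z ∈ T.subtree c | p z} := by
    rw [filter_biUnion,
      card_biUnion fun c hc c' hc' hne => disjoint_filter_filter (hdisj hc hc' hne)]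
  rw [T.subtree_eq_insert_biUnion w, filter_insert]
  split_ifs with hp
  · rw [card_insert_of_notMem fun h => hw (mem_filter.1 h).1, hcard, add_comm]
  · rw [hcard, zero_add]

theorem card_leaves_subtree (w : T.V) :
    #{z ∈ T.subtree w | T.G.degree z = 1} = #{z ∈ T.subtree w | isInternal T z} + 1 := by
  induction w using T.induction_on_children with
  | h w ih =>
  rw [T.card_filter_subtree, T.card_filter_subtree, sum_congr rfl ih, sum_add_distrib,
    sum_const, smul_eq_mul, mul_one]
  by_cases hw : isInternal T w
  · rw [T.card_children_of_isInternal hw, if_neg (T.isInternal_iff_degree_ne_one.1 hw),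
      if_pos hw]
    omega
  · have hw1 : T.G.degree w = 1 := not_not.1 (mt T.isInternal_iff_degree_ne_one.2 hw)
    simp [T.children_eq_empty_of_degree_eq_one hw1, hw, hw1]

theorem exists_mem_children_separating {v : Fin (n - 1) → T.V}
    (hv_int : ∀ i, isInternal T (v i)) (hv_surj : ∀ w, isInternal T w → ∃ i, v i = w)
    (hv_order : ∀ i j, treeLE T (v i) (v j) → j ≤ i) {a b : Fin (n - 1) → Fin n}
    (ha_inj : Function.Injective a) (ha_below : ∀ i, treeLE T (v i) (T.leaf (a i)))
    (hb : ∀ i, ∀ j ≤ i, b i ≠ a j) (i : Fin (n - 1)) :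
    ∃ c ∈ T.children (v i), treeLE T c (T.leaf (a i)) ∧ ¬ treeLE T c (T.leaf (b i)) := by
  classical
  have hne : v i ≠ T.leaf (a i) := fun h =>
    T.isInternal_iff_degree_ne_one.1 (hv_int i) (h ▸ T.leaf_deg _)
  obtain ⟨c, hc, hca⟩ := T.exists_mem_children_treeLE (ha_below i) hne
  refine ⟨c, hc, hca, fun hcb => ?_⟩
  obtain ⟨hroot, hpar⟩ := T.mem_children.1 hc
  set J : Finset (Fin (n - 1)) := {j | treeLE T c (v j)}
  have hJ : ∀ j ∈ J, j < i := fun j hj => by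
    have hcj := (mem_filter.1 hj).2
    refine lt_of_le_of_ne (hv_order _ _ (T.treeLE_trans (hpar ▸ T.parent_treeLE hroot) hcj)) ?_
    rintro rfl
    exact T.not_treeLE_parent hroot (hpar ▸ hcj)
  -- If `c` were above `b i` too, the subtree at `c` would contain the `#J` internal vertices
  -- `v j` (`j ∈ J`) but the `#J + 2` leaves `a i`, `b i` and `a j` (`j ∈ J`).
  set L : Finset (Fin n) := insert (a i) (insert (b i) (J.image a))
  have hcardL : #L = #J + 2 := by
    have hai : a i ∉ insert (b i) (J.image a) := by
      simp only [mem_insert, mem_image, not_or, not_exists, not_and]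
      exact ⟨(hb i i le_rfl).symm, fun j hj h => (hJ j hj).ne (ha_inj h)⟩
    have hbi : b i ∉ J.image a := by
      simp only [mem_image, not_exists, not_and]
      exact fun j hj h => hb i j (hJ j hj).le h.symm
    rw [card_insert_of_notMem hai, card_insert_of_notMem hbi,
      card_image_of_injective _ ha_inj]
  have hleaves : L.image T.leaf ⊆ {z ∈ T.subtree c | T.G.degree z = 1} := by
    simp only [L, image_insert, insert_subset_iff, mem_filter, mem_subtree, T.leaf_deg,
      and_true, image_subset_iff, mem_image]
    refine ⟨hca, hcb, fun j hj => ?_⟩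
    obtain ⟨k, hk, rfl⟩ := hj
    exact T.treeLE_trans (mem_filter.1 hk).2 (ha_below k)
  have hinternal : {z ∈ T.subtree c | isInternal T z} ⊆ J.image v := by
    intro z hz
    obtain ⟨hcz, hz⟩ := mem_filter.1 hz
    obtain ⟨j, rfl⟩ := hv_surj z hz
    exact mem_image_of_mem v (mem_filter.2 ⟨mem_univ j, T.mem_subtree.1 hcz⟩)
  have h1 := card_le_card hleaves
  have h2 := (card_le_card hinternal).trans card_image_le
  rw [card_image_of_injective _ T.leaf_inj, hcardL, T.card_leaves_subtree] at h1
  omega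

/-! ### The total weight -/

theorem sum_weight_eq_sum_depth_sub_depth_parent :
    ∑ e ∈ T.G.edgeFinset, T.weight e =
      ∑ c ∈ univ.erase T.root, (depth T c - depth T (T.parent c)) := by
  have himage : T.G.edgeFinset = (univ.erase T.root).image fun c => s(T.parent c, c) := by
    ext e
    induction e using Sym2.ind with | h x y =>
    simp only [SimpleGraph.mem_edgeFinset, SimpleGraph.mem_edgeSet, adj_iff_parent, mem_image,
      mem_erase, mem_univ, and_true, Sym2.eq_iff]
    constructor
    · rintro (⟨hx, rfl⟩ | ⟨hy, rfl⟩)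
      · exact ⟨x, hx, .inr ⟨rfl, rfl⟩⟩
      · exact ⟨y, hy, .inl ⟨rfl, rfl⟩⟩
    · rintro ⟨c, hc, ⟨rfl, rfl⟩ | ⟨rfl, rfl⟩⟩
      · exact .inr ⟨hc, rfl⟩
      · exact .inl ⟨hc, rfl⟩
  have hinj : Set.InjOn (fun c => s(T.parent c, c)) (univ.erase T.root) := by
    intro c hc c' hc' h
    rcases Sym2.eq_iff.1 h with ⟨-, h⟩ | ⟨h1, h2⟩
    · exact h
    · have l1 := T.length_rootPath_parent (mem_erase.1 hc).1
      have l2 := T.length_rootPath_parent (mem_erase.1 hc').1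
      rw [h1] at l1
      rw [← h2] at l2
      omega
  rw [himage, sum_image hinj]
  exact sum_congr rfl fun c hc => by rw [T.depth_parent (mem_erase.1 hc).1]; ring

theorem sum_depth_parent :
    ∑ c ∈ univ.erase T.root, depth T (T.parent c) =
      ∑ w, (#(T.children w) : ℤ) * depth T w := by
  rw [← sum_fiberwise_of_maps_to (g := T.parent) (t := univ) fun _ _ => mem_univ _]
  refine sum_congr rfl fun w _ => ?_
  have hfib : {c ∈ univ.erase T.root | T.parent c = w} = T.children w := by
    ext c
    simp [mem_children]
  rw [hfib, sum_congr rfl fun c hc => by rw [(T.mem_children.1 hc).2], sum_const, nsmul_eq_mul]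

theorem filter_degree_eq_one_eq_image :
    ({w | T.G.degree w = 1} : Finset T.V) = univ.image T.leaf := by
  ext w
  simp only [mem_filter, mem_univ, true_and, mem_image]
  exact ⟨T.leaf_surj w, fun ⟨i, hi⟩ => hi ▸ T.leaf_deg i⟩

theorem card_filter_isInternal_add_one : #{w | isInternal T w} + 1 = n := by
  have h := T.card_leaves_subtree T.root
  have huniv : T.subtree T.root = univ := eq_univ_of_forall fun z =>
    T.mem_subtree.2 (T.root_treeLE z)
  rw [huniv, T.filter_degree_eq_one_eq_image, card_image_of_injective _ T.leaf_inj,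
    card_univ, Fintype.card_fin] at h
  exact h.symm

theorem sum_height_add_d_eq_sum_weight :
    ∑ w with isInternal T w, (T.d - depth T w) + T.d = ∑ e ∈ T.G.edgeFinset, T.weight e := by
  have hleaf (w : T.V) : ¬ isInternal T w ↔ T.G.degree w = 1 := by
    rw [T.isInternal_iff_degree_ne_one, not_not]
  have hsum_depth : ∑ w, depth T w = n * T.d + ∑ w with isInternal T w, depth T w := by
    rw [← sum_filter_add_sum_filter_not univ (isInternal T), add_comm]
    simp only [hleaf]
    rw [T.filter_degree_eq_one_eq_image, sum_image fun i _ j _ h => T.leaf_inj h]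
    simp [T.depth_leaf]
  have hsum_children : ∑ w, (#(T.children w) : ℤ) * depth T w =
      2 * ∑ w with isInternal T w, depth T w := by
    rw [← sum_filter_add_sum_filter_not univ (isInternal T), mul_sum]
    simp only [hleaf]
    have h2 : ∀ w ∈ ({w | isInternal T w} : Finset T.V),
        (#(T.children w) : ℤ) * depth T w = 2 * depth T w := fun w hw => by
      rw [T.card_children_of_isInternal (mem_filter.1 hw).2, Nat.cast_ofNat]
    have h0 : ∀ w ∈ ({w | T.G.degree w = 1} : Finset T.V),
        (#(T.children w) : ℤ) * depth T w = 0 := fun w hw => by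
      simp [T.children_eq_empty_of_degree_eq_one (mem_filter.1 hw).2]
    rw [sum_congr rfl h2, sum_eq_zero h0, add_zero]
  have hcard : (#{w | isInternal T w} : ℤ) + 1 = n := by
    exact_mod_cast T.card_filter_isInternal_add_one
  rw [T.sum_weight_eq_sum_depth_sub_depth_parent, sum_sub_distrib, sum_sub_distrib,
    T.sum_depth_parent, hsum_children, sum_erase _ T.depth_root, hsum_depth, sum_const,
    nsmul_eq_mul, ← hcard]
  ring

theorem sum_filter_isInternal_eq {ι M : Type*} [Fintype ι] [AddCommMonoid M] {v : ι → T.V}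
    (hv_int : ∀ i, isInternal T (v i)) (hv_inj : Function.Injective v)
    (hv_surj : ∀ w, isInternal T w → ∃ i, v i = w) (f : T.V → M) :
    ∑ w with isInternal T w, f w = ∑ i, f (v i) := by
  have himage : ({w | isInternal T w} : Finset T.V) = univ.image v := by
    ext w
    simp only [mem_filter, mem_univ, true_and, mem_image]
    exact ⟨hv_surj w, fun ⟨i, hi⟩ => hi ▸ hv_int i⟩
  rw [himage, sum_image fun i _ j _ h => hv_inj h]

/-! ### Leading coefficients of the entries of `M` -/

noncomputable def rootEdges (z : T.V) : Finset (Sym2 T.V) :=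
  (rootPath T z).edges.toFinset

theorem rootEdges_eq_union {u z : T.V} {q : T.G.Walk u z}
    (hq : rootPath T z = (rootPath T u).append q) :
    T.rootEdges z = T.rootEdges u ∪ q.edges.toFinset := by
  simp [rootEdges, hq, List.toFinset_append]

theorem filter_rootEdges_eq_of_lt {u z : T.V} (h : treeLE T u z) {k : ℤ}
    (hk : k < depth T u - T.d) :
    {e ∈ T.rootEdges z | -hEdge T e = k} = {e ∈ T.rootEdges u | -hEdge T e = k} := by
  obtain ⟨q, hq⟩ := T.exists_rootPath_eq_append h
  have hq_empty : {e ∈ q.edges.toFinset | -hEdge T e = k} = ∅ :=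
    filter_eq_empty_iff.2 fun e he => by
      have := T.hEdge_le_of_mem_edges hq (List.mem_toFinset.1 he)
      omega
  rw [T.rootEdges_eq_union hq, filter_union, hq_empty, union_empty]

theorem mk_mem_filter_rootEdges {w c z : T.V} (hc : c ∈ T.children w) (hcz : treeLE T c z) :
    s(w, c) ∈ {e ∈ T.rootEdges z | -hEdge T e = depth T w - T.d} := by
  obtain ⟨hroot, rfl⟩ := T.mem_children.1 hc
  obtain ⟨q, hq⟩ := T.exists_rootPath_eq_append hcz
  have hdepth := T.depth_parent hroot
  have hw := T.weight_nonneg _ (T.G.mem_edgeSet.2 (T.parent_adj hroot))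
  refine mem_filter.2 ⟨?_, ?_⟩
  · rw [T.rootEdges_eq_union hq, rootEdges, T.rootPath_eq_concat_parent hroot]
    simp
  · rw [hEdge_mk]
    omega

theorem treeLE_of_mk_mem_rootEdges {w c z : T.V} (h : s(w, c) ∈ T.rootEdges z) :
    treeLE T c z :=
  T.treeLE_iff.2 ((rootPath T z).snd_mem_support_of_mem_edges (List.mem_toFinset.1 h))

theorem xval_eq_sum (a : ℕ → Sym2 T.V → ℂ) (j : ℕ) (c : Fin n) :
    xval T a j c = ∑ e ∈ T.rootEdges (T.leaf c), HahnSeries.single (-hEdge T e) (a j e) :=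
  (List.sum_toFinset _ (T.rootPath_isPath _).isTrail.edges_nodup).symm

theorem coeff_xval (a : ℕ → Sym2 T.V → ℂ) (j : ℕ) (c : Fin n) (k : ℤ) :
    (xval T a j c).coeff k = ∑ e ∈ T.rootEdges (T.leaf c) with -hEdge T e = k, a j e := by
  rw [xval_eq_sum, HahnSeries.coeff_sum, sum_filter]
  exact sum_congr rfl fun e _ => by simp [HahnSeries.coeff_single, eq_comm]

theorem coeff_xval_sub_eq_zero (a : ℕ → Sym2 T.V → ℂ) (j : ℕ) {w : T.V} {c c' : Fin n}
    (hc : treeLE T w (T.leaf c)) (hc' : treeLE T w (T.leaf c')) {k : ℤ}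
    (hk : k < depth T w - T.d) : (xval T a j c - xval T a j c').coeff k = 0 := by
  rw [HahnSeries.coeff_sub, coeff_xval, coeff_xval, T.filter_rootEdges_eq_of_lt hc hk,
    T.filter_rootEdges_eq_of_lt hc' hk, sub_self]

theorem coeff_xval_eq_zero (a : ℕ → Sym2 T.V → ℂ) (j : ℕ) (c : Fin n) {k : ℤ}
    (hk : k < -T.d) : (xval T a j c).coeff k = 0 := by
  rw [coeff_xval, T.filter_rootEdges_eq_of_lt (T.root_treeLE _) (by rwa [depth_root, zero_sub])]
  simp [rootEdges, rootPath_root]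

noncomputable def coeffPoly (j : ℕ) (c : Fin n) (k : ℤ) : MvPolynomial (ℕ × Sym2 T.V) ℂ :=
  ∑ e ∈ T.rootEdges (T.leaf c) with -hEdge T e = k, X (j, e)

theorem eval_coeffPoly (a : ℕ → Sym2 T.V → ℂ) (j : ℕ) (c : Fin n) (k : ℤ) :
    eval (fun q => a q.1 q.2) (T.coeffPoly j c k) = (xval T a j c).coeff k := by
  simp [coeffPoly, coeff_xval]

theorem eval_indicator_coeffPoly (j : ℕ) (c : Fin n) (k : ℤ) (e₀ : Sym2 T.V) :
    eval (fun q => if q.2 = e₀ then 1 else 0) (T.coeffPoly j c k) =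
      if e₀ ∈ {e ∈ T.rootEdges (T.leaf c) | -hEdge T e = k} then 1 else 0 := by
  simp [coeffPoly, sum_ite_eq']

theorem coeffPoly_sub_ne_zero {w c₀ : T.V} {c c' : Fin n} (hc₀ : c₀ ∈ T.children w)
    (hc : treeLE T c₀ (T.leaf c)) (hc' : ¬ treeLE T c₀ (T.leaf c')) (j : ℕ) :
    T.coeffPoly j c (depth T w - T.d) - T.coeffPoly j c' (depth T w - T.d) ≠ 0 := fun h => by
  have h' := congrArg (eval fun q => if q.2 = s(w, c₀) then (1 : ℂ) else 0) h
  rw [map_sub, eval_indicator_coeffPoly, eval_indicator_coeffPoly,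
    if_pos (T.mk_mem_filter_rootEdges hc₀ hc),
    if_neg fun hmem => hc' (T.treeLE_of_mk_mem_rootEdges (mem_filter.1 hmem).1)] at h'
  norm_num at h'

theorem coeffPoly_add_ne_zero (j : ℕ) (c c' : Fin n) :
    T.coeffPoly j c (-T.d) + T.coeffPoly j c' (-T.d) ≠ 0 := fun h => by
  have hne : T.root ≠ T.leaf c := fun h => by
    have := T.leaf_deg c
    rw [← h, T.root_deg] at this
    omega
  obtain ⟨c₀, hc₀, hc⟩ := T.exists_mem_children_treeLE (T.root_treeLE _) hne
  have hmem := T.mk_mem_filter_rootEdges hc₀ hc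
  rw [depth_root, zero_sub] at hmem
  have h' := congrArg (eval fun q => if q.2 = s(T.root, c₀) then (1 : ℂ) else 0) h
  rw [map_add, eval_indicator_coeffPoly, eval_indicator_coeffPoly, if_pos hmem] at h'
  split_ifs at h' <;> norm_num at h'

theorem order_xval_sub {a : ℕ → Sym2 T.V → ℂ} {j : ℕ} {w : T.V} {c c' : Fin n}
    (hc : treeLE T w (T.leaf c)) (hc' : treeLE T w (T.leaf c'))
    (h : eval (fun q => a q.1 q.2)
      (T.coeffPoly j c (depth T w - T.d) - T.coeffPoly j c' (depth T w - T.d)) ≠ 0) :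
    (xval T a j c - xval T a j c').order = depth T w - T.d := by
  rw [map_sub, eval_coeffPoly, eval_coeffPoly, ← HahnSeries.coeff_sub] at h
  exact HahnSeries.order_eq_of_coeff_ne_zero_of_forall_lt h
    fun k hk => T.coeff_xval_sub_eq_zero a j hc hc' hk

theorem order_xval_add {a : ℕ → Sym2 T.V → ℂ} {j : ℕ} {c c' : Fin n}
    (h : eval (fun q => a q.1 q.2) (T.coeffPoly j c (-T.d) + T.coeffPoly j c' (-T.d)) ≠ 0) :
    (xval T a j c + xval T a j c').order = -T.d := by
  rw [map_add, eval_coeffPoly, eval_coeffPoly, ← HahnSeries.coeff_add] at h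
  refine HahnSeries.order_eq_of_coeff_ne_zero_of_forall_lt h fun k hk => ?_
  rw [HahnSeries.coeff_add, T.coeff_xval_eq_zero a j c hk, T.coeff_xval_eq_zero a j c' hk,
    add_zero]

theorem order_Mmat_sub (hn : 3 ≤ n) {a : ℕ → Sym2 T.V → ℂ} {w : T.V} {c c' : Fin n}
    (hc : treeLE T w (T.leaf c)) (hc' : treeLE T w (T.leaf c'))
    (hdiff : ∀ j ∈ Ico 1 (n - 1), eval (fun q => a q.1 q.2)
      (T.coeffPoly j c (depth T w - T.d) - T.coeffPoly j c' (depth T w - T.d)) ≠ 0)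
    (hsum : eval (fun q => a q.1 q.2) (T.coeffPoly 1 c (-T.d) + T.coeffPoly 1 c' (-T.d)) ≠ 0)
    {r : Fin n} (hr : r.val ≠ 0) (hne : Mmat T a r c - Mmat T a r c' ≠ 0) :
    (Mmat T a r c - Mmat T a r c').order = depth T w - T.d + if r.val = 2 then -T.d else 0 := by
  have hr' := r.isLt
  rcases (by omega : r.val = 1 ∨ r.val = 2 ∨ 3 ≤ r.val) with h | h | h
  · have hM : Mmat T a r c - Mmat T a r c' = xval T a 1 c - xval T a 1 c' := by
      simp [Mmat, h]
    rw [hM, if_neg (by omega), add_zero]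
    exact T.order_xval_sub hc hc' (hdiff 1 (mem_Ico.2 ⟨le_rfl, by omega⟩))
  · have hM : Mmat T a r c - Mmat T a r c' =
        (xval T a 1 c - xval T a 1 c') * (xval T a 1 c + xval T a 1 c') := by
      simp [Mmat, h, sq_sub_sq, mul_comm]
    rw [hM] at hne ⊢
    rw [HahnSeries.order_mul (left_ne_zero_of_mul hne) (right_ne_zero_of_mul hne),
      T.order_xval_sub hc hc' (hdiff 1 (mem_Ico.2 ⟨le_rfl, by omega⟩)), T.order_xval_add hsum,
      if_pos h]
  · have hM : Mmat T a r c - Mmat T a r c' =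
        xval T a (r.val - 1) c - xval T a (r.val - 1) c' := by
      simp only [Mmat, if_neg (show r.val ≠ 0 by omega), if_neg (show r.val ≠ 1 by omega),
        if_neg (show r.val ≠ 2 by omega)]
    rw [hM, if_neg (by omega), add_zero]
    exact T.order_xval_sub hc hc' (hdiff _ (mem_Ico.2 ⟨by omega, by omega⟩))

/-! ### The column reduction -/

theorem Mstar_apply_of_forall_ne (av : ℕ → Sym2 T.V → ℂ) (a b : Fin (n - 1) → Fin n)
    {c : Fin n} (hc : ∀ i, a i ≠ c) (r : Fin n) : Mstar T av a b r c = Mmat T av r c :=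
  foldl_colRed_apply_of_forall_ne _ _ _ _ _ fun i _ => hc i

theorem Mstar_apply_col (av : ℕ → Sym2 T.V → ℂ) {a b : Fin (n - 1) → Fin n}
    (ha : Function.Injective a) {i : Fin (n - 1)} (hb : ∀ j ≤ i, b i ≠ a j) (r : Fin n) :
    Mstar T av a b r (a i) = Mmat T av r (a i) - Mmat T av r (b i) := by
  obtain ⟨l₁, l₂, hl⟩ := List.mem_iff_append.1 (List.mem_finRange i)
  have hsorted := List.pairwise_lt_finRange (n - 1)
  have hnodup := List.nodup_finRange (n - 1)
  rw [hl, List.pairwise_append] at hsorted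
  rw [hl, List.nodup_middle, List.nodup_cons] at hnodup
  refine foldl_colRed_apply_of_eq_append hl _ _ _ _ (fun j hj h => ?_) (fun j hj => ?_)
  · exact hnodup.1 (ha h ▸ hj)
  · rcases List.mem_cons.1 hj with rfl | hj
    · exact (hb j le_rfl).symm
    · exact (hb j (hsorted.2.2 j hj i List.mem_cons_self).le).symm

-- The factors are the coefficients of `x_{a i}^{(1)} + x_{b i}^{(1)}` at `t ^ (-d)` and of
-- `x_{a i}^{(j)} - x_{b i}^{(j)}` at `t ^ (depth (v i) - d)`, the expected leading terms.
noncomputable def genericPoly (v : Fin (n - 1) → T.V) (a b : Fin (n - 1) → Fin n) :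
    MvPolynomial (ℕ × Sym2 T.V) ℂ :=
  ∏ i, ((T.coeffPoly 1 (a i) (-T.d) + T.coeffPoly 1 (b i) (-T.d)) *
    ∏ j ∈ Ico 1 (n - 1),
      (T.coeffPoly j (a i) (depth T (v i) - T.d) - T.coeffPoly j (b i) (depth T (v i) - T.d)))

theorem genericPoly_ne_zero {v : Fin (n - 1) → T.V} {a b : Fin (n - 1) → Fin n}
    (hsep : ∀ i, ∃ c ∈ T.children (v i),
      treeLE T c (T.leaf (a i)) ∧ ¬ treeLE T c (T.leaf (b i))) :
    T.genericPoly v a b ≠ 0 := by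
  refine prod_ne_zero_iff.2 fun i _ => mul_ne_zero (T.coeffPoly_add_ne_zero 1 _ _)
    (prod_ne_zero_iff.2 fun j _ => ?_)
  obtain ⟨c, hc, hca, hcb⟩ := hsep i
  exact T.coeffPoly_sub_ne_zero hc hca hcb j

theorem order_Mstar_apply_col (hn : 3 ≤ n) {v : Fin (n - 1) → T.V} {a b : Fin (n - 1) → Fin n}
    (ha_inj : Function.Injective a) (ha_below : ∀ i, treeLE T (v i) (T.leaf (a i)))
    (hb_below : ∀ i, treeLE T (v i) (T.leaf (b i))) (hb : ∀ i, ∀ j ≤ i, b i ≠ a j)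
    {av : ℕ → Sym2 T.V → ℂ} (hP : eval (fun q => av q.1 q.2) (T.genericPoly v a b) ≠ 0)
    (i : Fin (n - 1)) {r : Fin n} (hr : r.val ≠ 0) (hne : Mstar T av a b r (a i) ≠ 0) :
    (Mstar T av a b r (a i)).order = depth T (v i) - T.d + if r.val = 2 then -T.d else 0 := by
  simp only [genericPoly, map_prod, map_mul, prod_ne_zero_iff, mem_univ, true_implies,
    mul_ne_zero_iff] at hP
  rw [T.Mstar_apply_col av ha_inj (hb i)] at hne ⊢
  exact T.order_Mmat_sub hn (ha_below i) (hb_below i) (hP i).2 (hP i).1 hr hne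

-- Row `0` of `M*` vanishes in the columns `a i`, so `σ` sends row `0` to the remaining column.
theorem order_prod_Mstar (hn : 3 ≤ n) {v : Fin (n - 1) → T.V} {a b : Fin (n - 1) → Fin n}
    (ha_inj : Function.Injective a) (ha_below : ∀ i, treeLE T (v i) (T.leaf (a i)))
    (hb_below : ∀ i, treeLE T (v i) (T.leaf (b i))) (hb : ∀ i, ∀ j ≤ i, b i ≠ a j)
    (av : ℕ → Sym2 T.V → ℂ) (hP : eval (fun q => av q.1 q.2) (T.genericPoly v a b) ≠ 0)
    (σ : Equiv.Perm (Fin n)) (hσ : ∏ r, Mstar T av a b r (σ r) ≠ 0) :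
    (∏ r, Mstar T av a b r (σ r)).order = ∑ i, (depth T (v i) - T.d) - T.d := by
  have hentry (r : Fin n) : Mstar T av a b r (σ r) ≠ 0 := prod_ne_zero_iff.1 hσ r (mem_univ r)
  set r₀ : Fin n := ⟨0, by omega⟩
  have hσ₀ (i : Fin (n - 1)) : a i ≠ σ r₀ := fun h => hentry r₀ <| by
    simp [← h, T.Mstar_apply_col av ha_inj (hb i), Mmat, r₀]
  have huniv : insert (σ r₀) (univ.image a) = univ := by
    refine eq_univ_of_card _ ?_
    rw [card_insert_of_notMem (by simpa using hσ₀), card_image_of_injective _ ha_inj, card_univ,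
      Fintype.card_fin, Fintype.card_fin]
    omega
  have hcolumn (i : Fin (n - 1)) :=
    T.order_Mstar_apply_col hn ha_inj ha_below hb_below hb hP i (r := σ.symm (a i))
      (fun h => hσ₀ i <| by
        rw [← σ.apply_symm_apply (a i), show σ.symm (a i) = r₀ from Fin.ext h])
      (by simpa using hentry (σ.symm (a i)))
  obtain ⟨i₂, hi₂⟩ : ∃ i₂, a i₂ = σ ⟨2, by omega⟩ := by
    have h₂ := mem_univ (σ ⟨2, by omega⟩)
    rw [← huniv] at h₂
    simpa [r₀, Fin.ext_iff, eq_comm] using h₂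
  have hr₂ (i : Fin (n - 1)) : (σ.symm (a i)).val = 2 ↔ i = i₂ := by
    rw [← ha_inj.eq_iff, hi₂, ← σ.symm_apply_eq, Fin.ext_iff]
  have hreindex := Equiv.sum_comp σ fun c => (Mstar T av a b (σ.symm c) c).order
  simp only [Equiv.symm_apply_apply] at hreindex
  rw [HahnSeries.order_prod _ _ fun r _ => hentry r, hreindex, ← huniv,
    sum_insert (by simpa using hσ₀), sum_image fun i _ j _ h => ha_inj h,
    T.Mstar_apply_of_forall_ne av a b hσ₀]
  simp only [hcolumn, hr₂, sum_add_distrib, sum_ite_eq', mem_univ, if_true, σ.symm_apply_apply]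
  rw [show Mmat T av r₀ (σ r₀) = 1 from if_pos rfl, HahnSeries.order_one]
  ring

end UltraTree

/-- with `v`, `α` (written `a`), and `b` as in the paper, there is a
nonzero polynomial `P` over `ℂ` in the variables `a_j(e)` such that, whenever `P`
does not vanish at the chosen values, every nonzero permutation product of entries
of the column reduction `M*` of `M` has `t`-adic valuation exactly
`-(Σ_{i=1}^{n-1} h(v_i) + d) = -D`. -/
theorem stmt6 (n : ℕ) (hn : 4 ≤ n) (T : UltraTree n)
    (D : ℤ) (hD : D = ∑ e ∈ T.G.edgeFinset, T.weight e)
    (v : Fin (n - 1) → T.V)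
    (hv_int : ∀ i, isInternal T (v i))
    (hv_inj : Function.Injective v)
    (hv_surj : ∀ w : T.V, isInternal T w → ∃ i, v i = w)
    (hv_order : ∀ i j : Fin (n - 1), treeLE T (v i) (v j) → j ≤ i)
    (a : Fin (n - 1) → Fin n)
    (ha_inj : Function.Injective a)
    (ha_below : ∀ i, treeLE T (v i) (T.leaf (a i)))
    (b : Fin (n - 1) → Fin n)
    (hb : ∀ i, treeLE T (v i) (T.leaf (b i)) ∧
      ∀ j : Fin (n - 1), j ≤ i → b i ≠ a j) :
    ∃ P : MvPolynomial (ℕ × Sym2 T.V) ℂ, P ≠ 0 ∧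
      ∀ av : ℕ → Sym2 T.V → ℂ,
        MvPolynomial.eval (fun q : ℕ × Sym2 T.V => av q.1 q.2) P ≠ 0 →
          ∀ σ : Equiv.Perm (Fin n),
            (∏ i, Mstar T av a b i (σ i)) ≠ 0 →
              (∏ i, Mstar T av a b i (σ i)).order =
                -((∑ i : Fin (n - 1), (T.d - depth T (v i))) + T.d) ∧
              (∑ i : Fin (n - 1), (T.d - depth T (v i))) + T.d = D := by
  have hb_lt (i : Fin (n - 1)) : ∀ j ≤ i, b i ≠ a j := (hb i).2
  refine ⟨T.genericPoly v a b, T.genericPoly_ne_zero fun i =>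
    T.exists_mem_children_separating hv_int hv_surj hv_order ha_inj ha_below hb_lt i,
    fun av hP σ hσ => ⟨?_, ?_⟩⟩
  · rw [T.order_prod_Mstar (by omega) ha_inj ha_below (fun i => (hb i).1) hb_lt av hP σ hσ,
      neg_add, ← Finset.sum_neg_distrib]
    simp only [neg_sub]
    ring
  · rw [hD, ← T.sum_height_add_d_eq_sum_weight,
      T.sum_filter_isInternal_eq hv_int hv_inj hv_surj (fun w => T.d - depth T w)]
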